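/- For all simple types σ and all x, y in the interpretation of σ: if x ⊐_σ y then x ⊒_σ addcost_σ(1, y). -/
import Mathlib


/-- Simple types over a set of sorts `S`. -/
inductive Ty (S : Type) : Type where
  | base : S → Ty S
  | arrow : Ty S → Ty S → Ty S

/-- The interpretation of types: a base sort `ι` is interpreted as the set of
tuples `ℕ^{K ι + 1}` (so tuples always have length ≥ 1), and an arrow type as
the full function space (membership in the strongly monotonic functionals is
the predicate `Mem` below). -/
def Interp {S : Type} (K : S → ℕ) : Ty S → Type
  | .base ι => Fin (K ι + 1) → ℕ
  | .arrow σ τ => Interp K σ → Interp K τ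

mutual
/-- Membership in the set of strongly monotonic functionals of type `σ`. -/
def Mem {S : Type} (K : S → ℕ) : (σ : Ty S) → Interp K σ → Prop
  | .base _, _ => True
  | .arrow σ τ, F =>
      (∀ x, Mem K σ x → Mem K τ (F x)) ∧
      (∀ x y, Mem K σ x → Mem K σ y → TGt K σ x y → TGt K τ (F x) (F y)) ∧
      (∀ x y, Mem K σ x → Mem K σ y → TGe K σ x y → TGe K τ (F x) (F y))

/-- The hereditary strict order `⊐` on the interpretation of a type. -/
def TGt {S : Type} (K : S → ℕ) : (σ : Ty S) → Interp K σ → Interp K σ → Prop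
  | .base _, x, y => (∀ i, y i ≤ x i) ∧ y 0 < x 0
  | .arrow σ τ, F, G => (∃ x, Mem K σ x) ∧ ∀ x, Mem K σ x → TGt K τ (F x) (G x)

/-- The hereditary weak order `⊒` on the interpretation of a type. -/
def TGe {S : Type} (K : S → ℕ) : (σ : Ty S) → Interp K σ → Interp K σ → Prop
  | .base _, x, y => ∀ i, y i ≤ x i
  | .arrow σ τ, F, G => ∀ x, Mem K σ x → TGe K τ (F x) (G x)
end

/-- `addcost σ c x` hereditarily adds `c` to the cost (first) component. -/
def addcost {S : Type} (K : S → ℕ) : (σ : Ty S) → ℕ → Interp K σ → Interp K σ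
  | .base _, c, x => fun i => if i = 0 then c + x i else x i
  | .arrow σ τ, c, F => fun d => addcost K τ c (F d)

mutual
/-- The hereditarily minimal element `0_σ`. -/
def nul {S : Type} (K : S → ℕ) : (σ : Ty S) → Interp K σ
  | .base _ => fun _ => 0
  | .arrow σ τ => fun d => addcost K τ (cost K σ d) (nul K τ)

/-- The hereditary cost extraction `cost_σ`. -/
def cost {S : Type} (K : S → ℕ) : (σ : Ty S) → Interp K σ → ℕ
  | .base _, x => x 0
  | .arrow σ τ, F => cost K τ (F (nul K σ))
end

/-- If `x ⊐_σ y` then `x ⊒_σ addcost σ 1 y`. -/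
theorem ge_addcost_one_of_gt {S : Type} (K : S → ℕ) (σ : Ty S)
    (x y : Interp K σ) (hx : Mem K σ x) (hy : Mem K σ y)
    (h : TGt K σ x y) :
    TGe K σ x (addcost K σ 1 y) := by
  induction σ with
  | base ι =>
      obtain ⟨hle, hlt⟩ := h
      intro i
      simp only [addcost]
      split
      · next hi => subst hi; omega
      · exact hle i
  | arrow σ τ ihσ ihτ =>
      intro d hd
      exact ihτ (x d) (y d) (hx.1 d hd) (hy.1 d hd) (h.2 d hd)
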